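/- In the total quotient ring Q of S = F[[x,y]]/(x²y), the element z = x²(x+y)^{-1} is integral over S; in fact z² = zx holds in Q. -/
import Mathlib


noncomputable section

set_option maxHeartbeats 1000000
set_option synthInstance.maxHeartbeats 1000000

/-- The D-infinity plane singularity `S = F[[x,y]]/(x²y)`. -/
abbrev Dinf (F : Type*) [Field F] : Type _ :=
  MvPowerSeries (Fin 2) F ⧸
    (Ideal.span {(MvPowerSeries.X (0 : Fin 2)) ^ 2 * MvPowerSeries.X 1} :
      Ideal (MvPowerSeries (Fin 2) F))

variable (F : Type*) [Field F]

/-- The image of the variable `x` in `S`. -/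
abbrev xS : Dinf F := Ideal.Quotient.mk _ (MvPowerSeries.X 0)

/-- The image of the variable `y` in `S`. -/
abbrev yS : Dinf F := Ideal.Quotient.mk _ (MvPowerSeries.X 1)

/-- The total quotient ring `Q` of `S`, the localization at the nonzerodivisors. -/
abbrev QS : Type _ := Localization (nonZeroDivisors (Dinf F))

/-- The canonical map `S → Q`. -/
abbrev toQ : Dinf F →+* QS F := algebraMap (Dinf F) (QS F)

/-- The element `z = x²(x+y)⁻¹` of the total quotient ring `Q`. -/
abbrev zQ : QS F := toQ F (xS F ^ 2) * Ring.inverse (toQ F (xS F + yS F))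

lemma mul_sub_self_eq_zero {R : Type*} [CommRing R] {z c : R} (h : z ^ 2 = z * c) :
    z * (z - c) = 0 := by
  rw [mul_sub, ← pow_two, h, sub_self]

lemma x3y_eq_zero : (xS F) ^ 3 * yS F = 0 := by
  rw [← map_pow, ← map_mul, Ideal.Quotient.eq_zero_iff_mem]
  exact Ideal.mem_span_singleton.mpr ⟨MvPowerSeries.X 0, by ring⟩

lemma x4_eq : (xS F) ^ 4 = (xS F) ^ 3 * (xS F + yS F) := by
  linear_combination -(x3y_eq_zero F)

theorem stmt14 (hu : IsUnit (toQ F (xS F + yS F))) :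
    IsIntegral (Dinf F) (zQ F) ∧ zQ F ^ 2 = zQ F * toQ F (xS F) := by
  set a : QS F := toQ F (xS F) with ha
  set u : QS F := toQ F (xS F + yS F) with huu
  set v : QS F := Ring.inverse u with hv
  have huv : u * v = 1 := Ring.mul_inverse_cancel _ hu
  have hx4Q : a ^ 4 = a ^ 3 * u := by
    have h := congrArg (toQ F) (x4_eq F)
    rw [map_mul, map_pow, map_pow] at h
    exact h
  have hz : zQ F = a ^ 2 * v := by rw [zQ, map_pow, ← ha, ← huu, ← hv]
  have key : zQ F ^ 2 = zQ F * toQ F (xS F) := by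
    rw [hz, ← ha]
    calc (a ^ 2 * v) ^ 2 = a ^ 4 * v ^ 2 := by ring
      _ = a ^ 3 * (u * v) * v := by rw [hx4Q]; ring
      _ = a ^ 3 * v := by rw [huv]; ring
      _ = a ^ 2 * v * a := by ring
  refine ⟨⟨Polynomial.X * (Polynomial.X - Polynomial.C (xS F)),
    (Polynomial.monic_X).mul (Polynomial.monic_X_sub_C _), ?_⟩, key⟩
  rw [← Polynomial.aeval_def, map_mul, map_sub, Polynomial.aeval_X, Polynomial.aeval_C]
  exact mul_sub_self_eq_zero (R := QS F) key
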